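/- arXiv:2604.23418 — 2 statements merged into one kernel-verified Lean document; each statement's English description precedes it below -/
import Mathlib

section
/- For every power-of-two dimension d and every deterministic unit vector u ∈ S^{d−1}, the two-block structured rotation T(u) := (1/d) H D⁽¹⁾ H D⁽²⁾ u satisfies E[T(u)] = 0 and Cov(T(u)) = (1/d) I_d. -/
open MeasureTheory ProbabilityTheory Finset
open scoped ENNReal NNReal

/-- Sylvester/Walsh–Hadamard matrix of order `d` (intended for `d = 2^m`):
`H i j = (-1)^{popcount(i AND j)}`; for `d = 2^m` this satisfies the recursion
`H_{2n} = [[H_n, H_n], [H_n, -H_n]]` with `H₁ = (1)`. -/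
def Had (d : ℕ) : Matrix (Fin d) (Fin d) ℝ :=
  Matrix.of fun i j => (-1 : ℝ) ^ ((Nat.digits 2 (Nat.land i.1 j.1)).sum)

/-- A Boolean encoded as a Rademacher sign. -/
def rsign (b : Bool) : ℝ := if b then 1 else -1


/-- parity character -/
noncomputable def chi (n : ℕ) : ℝ := (-1 : ℝ) ^ ((Nat.digits 2 n).sum)

lemma chi_zero : chi 0 = 1 := by simp [chi]

lemma chi_bit (b : Bool) (n : ℕ) :
    chi (Nat.bit b n) = (if b then (-1 : ℝ) else 1) * chi n := by
  rcases Nat.eq_zero_or_pos (Nat.bit b n) with h | h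
  · have hb : b = false ∧ n = 0 := by
      cases b <;> simp [Nat.bit_val] at h ⊢ <;> omega
    simp [hb.1, hb.2, h, chi_zero]
  · rw [chi, Nat.digits_def' (by norm_num : 1 < 2) h]
    rw [List.sum_cons, pow_add, Nat.bit_mod_two, Nat.bit_div_two]
    cases b <;> simp [chi]

lemma chi_xor (a b : ℕ) : chi (a ^^^ b) = chi a * chi b := by
  induction a using Nat.binaryRec generalizing b with
  | zero => simp [chi_zero]
  | bit c a ih =>
    have hb := Nat.bit_testBit_zero_shiftRight_one b
    rw [← hb]
    set c' := b.testBit 0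
    set b' := b >>> 1
    have hx : Nat.bit c a ^^^ Nat.bit c' b' = Nat.bit (xor c c') (a ^^^ b') := by
      apply Nat.eq_of_testBit_eq
      intro i
      cases i <;> simp [Nat.testBit_bit_zero, Nat.testBit_xor, Nat.testBit_bit_succ]
    rw [hx, chi_bit, chi_bit, chi_bit, ih]
    cases c <;> cases c' <;> simp <;> ring

lemma sum_range_two_mul (f : ℕ → ℝ) (n : ℕ) :
    ∑ j ∈ range (2 * n), f j = ∑ j ∈ range n, (f (2 * j) + f (2 * j + 1)) := by
  induction n with
  | zero => simp
  | succ n ih =>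
    have h : 2 * (n + 1) = 2 * n + 1 + 1 := by ring
    rw [h, Finset.sum_range_succ, Finset.sum_range_succ, ih, Finset.sum_range_succ]
    ring

lemma chi_land_sum (m : ℕ) : ∀ s, s < 2 ^ m →
    ∑ j ∈ range (2 ^ m), chi (s &&& j) = if s = 0 then (2 ^ m : ℝ) else 0 := by
  induction m with
  | zero =>
    intro s hs
    interval_cases s
    simp [chi_zero]
  | succ m ih =>
    intro s hs
    have hb := Nat.bit_testBit_zero_shiftRight_one s
    rw [← hb]
    set b := s.testBit 0 with hbdef
    set s' := s >>> 1 with hsdef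
    have hs' : s' < 2 ^ m := by
      have h : Nat.bit b s' < 2 ^ (m + 1) := by rw [hb]; exact hs
      rw [Nat.bit_val, pow_succ] at h
      have hb1 : b.toNat ≤ 1 := Bool.toNat_le b
      omega
    have h2 : (2 : ℕ) ^ (m + 1) = 2 * 2 ^ m := by rw [pow_succ]; ring
    rw [h2, sum_range_two_mul]
    have key : ∀ j, chi (Nat.bit b s' &&& (2 * j)) + chi (Nat.bit b s' &&& (2 * j + 1))
        = (1 + (if b then (-1 : ℝ) else 1)) * chi (s' &&& j) := by
      intro j
      have e1 : 2 * j = Nat.bit false j := by simp [Nat.bit_val]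
      have e2 : 2 * j + 1 = Nat.bit true j := by simp [Nat.bit_val]
      rw [e2, e1, Nat.land_bit, Nat.land_bit, chi_bit, chi_bit]
      cases b <;> simp <;> ring
    rw [Finset.sum_congr rfl (fun j _ => key j), ← Finset.mul_sum, ih s' hs']
    cases b with
    | true =>
      have : Nat.bit true s' ≠ 0 := by simp [Nat.bit_val]
      simp [this]
    | false =>
      by_cases h0 : s' = 0
      · simp [h0, Nat.bit_val]; ring
      · have : Nat.bit false s' ≠ 0 := by simp [Nat.bit_val, h0]
        simp [h0, this]

lemma Had_eq_chi (d : ℕ) (i j : Fin d) : Had d i j = chi (i.1 &&& j.1) := rfl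

lemma Had_sq (d : ℕ) (i j : Fin d) : Had d i j * Had d i j = 1 := by
  rw [Had_eq_chi, chi, ← pow_add, ← two_mul, pow_mul]
  norm_num

lemma had_orth (m : ℕ) {d : ℕ} (hd : d = 2 ^ m) (k r : Fin d) :
    ∑ j, Had d k j * Had d r j = if k = r then (d : ℝ) else 0 := by
  subst hd
  have hstep : ∀ j : Fin (2 ^ m), Had (2 ^ m) k j * Had (2 ^ m) r j
      = chi ((k.1 ^^^ r.1) &&& j.1) := by
    intro j
    rw [Had_eq_chi, Had_eq_chi, Nat.and_xor_distrib_right, chi_xor]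
  rw [Finset.sum_congr rfl (fun j _ => hstep j)]
  rw [Fin.sum_univ_eq_sum_range (fun j => chi ((k.1 ^^^ r.1) &&& j)) (2 ^ m)]
  have := chi_land_sum m (k.1 ^^^ r.1) (Nat.xor_lt_two_pow k.2 r.2)
  rw [this]
  have : k.1 ^^^ r.1 = 0 ↔ k = r := by
    rw [xor_eq_zero_iff, Fin.val_eq_val]
  by_cases h : k = r
  · simp [this.mpr h, h]
  · simp [h, (not_iff_not.mpr this).mpr h]

lemma rsign_not (b : Bool) : rsign (!b) = - rsign b := by cases b <;> simp [rsign]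
lemma rsign_sq (b : Bool) : rsign b * rsign b = 1 := by cases b <;> norm_num [rsign]

lemma sum_rsign_zero {d : ℕ} (j : Fin d) (c : (Fin d → Bool) → ℝ)
    (hc : ∀ ε b, c (Function.update ε j b) = c ε) :
    ∑ ε : Fin d → Bool, rsign (ε j) * c ε = 0 := by
  apply Finset.sum_ninvolution (g := fun ε => Function.update ε j (!ε j))
  · intro ε
    rw [hc ε (!ε j), Function.update_self, rsign_not]
    ring
  · intro ε _ h
    have := congrFun h j
    rw [Function.update_self] at this
    simp at this
  · intro ε; exact Finset.mem_univ _
  · intro ε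
    simp [Function.update_self, Function.update_idem]

lemma sum_rsign_pair {d : ℕ} (j j' : Fin d) :
    ∑ ε : Fin d → Bool, rsign (ε j) * rsign (ε j') = if j = j' then (2 ^ d : ℝ) else 0 := by
  by_cases h : j = j'
  · subst h
    rw [Finset.sum_congr rfl fun ε _ => rsign_sq (ε j)]
    simp [Finset.card_univ]
  · rw [if_neg h]
    exact sum_rsign_zero j (fun ε => rsign (ε j'))
      (fun ε b => by beta_reduce; rw [Function.update_of_ne (Ne.symm h)])

lemma sum_pair (d : ℕ) (A B : Fin d → ℝ) :
    ∑ ε : Fin d → Bool, (∑ j, A j * rsign (ε j)) * (∑ j, B j * rsign (ε j))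
      = (2 ^ d : ℝ) * ∑ j, A j * B j := by
  have expand : ∀ ε : Fin d → Bool, (∑ j, A j * rsign (ε j)) * (∑ j, B j * rsign (ε j))
      = ∑ j, ∑ j', (A j * B j') * (rsign (ε j) * rsign (ε j')) := by
    intro ε
    rw [Finset.sum_mul_sum]
    exact Finset.sum_congr rfl fun j _ => Finset.sum_congr rfl fun j' _ => by ring
  rw [Finset.sum_congr rfl fun ε _ => expand ε, Finset.sum_comm]
  have hj : ∀ j : Fin d,
      ∑ ε : Fin d → Bool, ∑ j', (A j * B j') * (rsign (ε j) * rsign (ε j'))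
      = (2 ^ d : ℝ) * (A j * B j) := by
    intro j
    rw [Finset.sum_comm]
    have inner : ∀ j' : Fin d,
        ∑ ε : Fin d → Bool, (A j * B j') * (rsign (ε j) * rsign (ε j'))
        = (A j * B j') * (if j = j' then (2 ^ d : ℝ) else 0) := by
      intro j'
      rw [← Finset.mul_sum, sum_rsign_pair]
    rw [Finset.sum_congr rfl fun j' _ => inner j']
    simp [mul_ite]
    ring
  rw [Finset.sum_congr rfl fun j _ => hj j, ← Finset.mul_sum]

/-- Canonical probability space carrying the two independent layers of i.i.d. Rademacher
signs: the uniform measure on pairs of sign patterns. -/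
noncomputable def μsigns (d : ℕ) : Measure ((Fin d → Bool) × (Fin d → Bool)) :=
  (PMF.uniformOfFintype _).toMeasure

/-- `k`-th coordinate of the two-block structured rotation `T(u) = (1/d) H D⁽¹⁾ H D⁽²⁾ u`. -/
noncomputable def Tcoord (d : ℕ) (u : Fin d → ℝ)
    (ω : (Fin d → Bool) × (Fin d → Bool)) (k : Fin d) : ℝ :=
  (1 / (d : ℝ)) * ∑ j, Had d k j * rsign (ω.1 j) * ∑ ℓ, Had d j ℓ * rsign (ω.2 ℓ) * u ℓ

/-- The structured rotation as a random vector. -/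
noncomputable def Tvec (d : ℕ) (u : Fin d → ℝ)
    (ω : (Fin d → Bool) × (Fin d → Bool)) : Fin d → ℝ :=
  fun k => Tcoord d u ω k

/-- Standard Gaussian measure on ℝ^d. -/
noncomputable def stdGaussian (d : ℕ) : Measure (Fin d → ℝ) :=
  Measure.pi fun _ => gaussianReal 0 1

/-- The uniform (rotation invariant) probability measure on the unit sphere `S^{d-1}`,
realized as the law of a normalized standard Gaussian vector. -/
noncomputable def sphereUniform (d : ℕ) : Measure (Fin d → ℝ) :=
  (stdGaussian d).map fun x i => x i / Real.sqrt (∑ j, x j ^ 2)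

/-- Kolmogorov distance between the laws of two real random variables. -/
noncomputable def kolg {Ω₁ Ω₂ : Type*} [MeasurableSpace Ω₁] [MeasurableSpace Ω₂]
    (μ₁ : Measure Ω₁) (μ₂ : Measure Ω₂) (A : Ω₁ → ℝ) (B : Ω₂ → ℝ) : ℝ :=
  ⨆ t : ℝ, |(μ₁ {ω | A ω ≤ t}).toReal - (μ₂ {ω | B ω ≤ t}).toReal|

/-- `f : ℝ^d → ℝ` is 1-Lipschitz with respect to the Euclidean norm. -/
def EucLip (d : ℕ) (f : (Fin d → ℝ) → ℝ) : Prop :=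
  ∀ x y : Fin d → ℝ, |f x - f y| ≤ Real.sqrt (∑ i, (x i - y i) ^ 2)

/-- Wasserstein-1 distance (Kantorovich–Rubinstein dual form) between two laws on ℝ^d,
with respect to the Euclidean norm. -/
noncomputable def W1 (d : ℕ) (μ ν : Measure (Fin d → ℝ)) : ℝ :=
  ⨆ f : {f : (Fin d → ℝ) → ℝ // EucLip d f}, |(∫ x, f.1 x ∂μ) - ∫ x, f.1 x ∂ν|

/-- The law of a Rademacher random variable. -/
noncomputable def radLaw : Measure ℝ :=
  (2⁻¹ : ℝ≥0∞) • Measure.dirac 1 + (2⁻¹ : ℝ≥0∞) • Measure.dirac (-1)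

noncomputable def md (d : ℕ) : ℝ :=
  Real.sqrt (2 / Real.pi) * Real.sqrt ((d : ℝ) / ((d : ℝ) - 1))

/-- `sup_{u ∈ S^{d-1}} W₁(T(u), X(u))` where `X(u)` is uniform on the sphere. -/
noncomputable def supW1T (d : ℕ) : ℝ :=
  ⨆ u : {u : Fin d → ℝ // ∑ ℓ, u ℓ ^ 2 = 1},
    W1 d ((μsigns d).map (Tvec d u.1)) (sphereUniform d)

/-- First standard basis vector. -/
def e1 (d : ℕ) : Fin d → ℝ := fun i => if i.1 = 0 then 1 else 0

/-- Sign of a real number with the (arbitrary) convention `sgn 0 = 1`. -/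
noncomputable def sgn (r : ℝ) : ℝ := if 0 ≤ r then 1 else -1


section StructuredRotationAux

variable {d : ℕ}

lemma Tcoord_eq (d : ℕ) (u : Fin d → ℝ) (ω : (Fin d → Bool) × (Fin d → Bool)) (k : Fin d) :
    Tcoord d u ω k
      = (1 / (d : ℝ)) * ∑ j, (Had d k j * (∑ ℓ, (Had d j ℓ * u ℓ) * rsign (ω.2 ℓ)))
          * rsign (ω.1 j) := by
  unfold Tcoord
  congr 1
  refine Finset.sum_congr rfl fun j _ => ?_
  rw [Finset.sum_congr rfl (fun ℓ (_ : ℓ ∈ Finset.univ) =>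
    (by ring : Had d j ℓ * rsign (ω.2 ℓ) * u ℓ = (Had d j ℓ * u ℓ) * rsign (ω.2 ℓ)))]
  ring

lemma integral_musigns (d : ℕ) (F : ((Fin d → Bool) × (Fin d → Bool)) → ℝ) :
    ∫ ω, F ω ∂μsigns d = ((2 : ℝ) ^ d * 2 ^ d)⁻¹ * ∑ ω, F ω := by
  have hcard : (Fintype.card ((Fin d → Bool) × (Fin d → Bool)) : ℝ) = 2 ^ d * 2 ^ d := by
    simp [Fintype.card_prod]
  rw [μsigns, PMF.integral_eq_sum]
  have h : ∀ ω : (Fin d → Bool) × (Fin d → Bool),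
      ((PMF.uniformOfFintype _) ω).toReal • F ω = ((2 : ℝ) ^ d * 2 ^ d)⁻¹ * F ω := by
    intro ω
    rw [PMF.uniformOfFintype_apply, smul_eq_mul]
    congr 1
    rw [ENNReal.toReal_inv, ENNReal.toReal_natCast, hcard]
  rw [Finset.sum_congr rfl fun ω _ => h ω, ← Finset.mul_sum]

lemma sum_Tcoord (d : ℕ) (u : Fin d → ℝ) (k : Fin d) :
    ∑ ω : (Fin d → Bool) × (Fin d → Bool), Tcoord d u ω k = 0 := by
  rw [Fintype.sum_prod_type, Finset.sum_comm]
  apply Finset.sum_eq_zero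
  intro δ _
  rw [Finset.sum_congr rfl fun ε (_ : ε ∈ Finset.univ) => Tcoord_eq d u (ε, δ) k,
    ← Finset.mul_sum, Finset.sum_comm]
  have h : ∀ j : Fin d,
      ∑ ε : Fin d → Bool,
        (Had d k j * (∑ ℓ, (Had d j ℓ * u ℓ) * rsign (δ ℓ))) * rsign (ε j) = 0 := by
    intro j
    rw [Finset.sum_congr rfl fun ε (_ : ε ∈ Finset.univ) => mul_comm
      (Had d k j * (∑ ℓ, (Had d j ℓ * u ℓ) * rsign (δ ℓ))) (rsign (ε j))]
    exact sum_rsign_zero j _ (fun ε b => rfl)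
  rw [Finset.sum_congr rfl fun j _ => h j]
  simp

lemma sum_Tcoord_mul (m d : ℕ) (hd : d = 2 ^ m) (u : Fin d → ℝ) (hu : ∑ ℓ, u ℓ ^ 2 = 1)
    (k r : Fin d) :
    ∑ ω : (Fin d → Bool) × (Fin d → Bool), Tcoord d u ω k * Tcoord d u ω r
      = (1 / (d : ℝ)) ^ 2 * (2 ^ d * 2 ^ d) * (if k = r then (d : ℝ) else 0) := by
  rw [Fintype.sum_prod_type, Finset.sum_comm]
  have hδ : ∀ δ : Fin d → Bool,
      ∑ ε : Fin d → Bool, Tcoord d u (ε, δ) k * Tcoord d u (ε, δ) r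
      = (1 / (d : ℝ)) ^ 2 * (2 ^ d *
          ∑ j, (Had d k j * (∑ ℓ, (Had d j ℓ * u ℓ) * rsign (δ ℓ)))
            * (Had d r j * (∑ ℓ, (Had d j ℓ * u ℓ) * rsign (δ ℓ)))) := by
    intro δ
    have h1 : ∀ ε : Fin d → Bool, Tcoord d u (ε, δ) k * Tcoord d u (ε, δ) r
        = (1 / (d : ℝ)) ^ 2 *
          ((∑ j, (Had d k j * (∑ ℓ, (Had d j ℓ * u ℓ) * rsign (δ ℓ))) * rsign (ε j)) *
           (∑ j, (Had d r j * (∑ ℓ, (Had d j ℓ * u ℓ) * rsign (δ ℓ))) * rsign (ε j))) := by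
      intro ε
      rw [Tcoord_eq d u (ε, δ) k, Tcoord_eq d u (ε, δ) r]
      ring
    rw [Finset.sum_congr rfl fun ε _ => h1 ε, ← Finset.mul_sum,
      sum_pair d (fun j => Had d k j * (∑ ℓ, (Had d j ℓ * u ℓ) * rsign (δ ℓ)))
        (fun j => Had d r j * (∑ ℓ, (Had d j ℓ * u ℓ) * rsign (δ ℓ)))]
  rw [Finset.sum_congr rfl fun δ _ => hδ δ, ← Finset.mul_sum]
  have h2 : ∑ δ : Fin d → Bool,
      (2 : ℝ) ^ d * ∑ j, (Had d k j * (∑ ℓ, (Had d j ℓ * u ℓ) * rsign (δ ℓ)))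
        * (Had d r j * (∑ ℓ, (Had d j ℓ * u ℓ) * rsign (δ ℓ)))
      = 2 ^ d * (2 ^ d * ∑ j, Had d k j * Had d r j) := by
    rw [← Finset.mul_sum]
    congr 1
    rw [Finset.sum_comm]
    have h3 : ∀ j : Fin d,
        ∑ δ : Fin d → Bool, (Had d k j * (∑ ℓ, (Had d j ℓ * u ℓ) * rsign (δ ℓ)))
          * (Had d r j * (∑ ℓ, (Had d j ℓ * u ℓ) * rsign (δ ℓ)))
        = 2 ^ d * (Had d k j * Had d r j) := by
      intro j
      have h4 : ∀ δ : Fin d → Bool,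
          (Had d k j * (∑ ℓ, (Had d j ℓ * u ℓ) * rsign (δ ℓ)))
            * (Had d r j * (∑ ℓ, (Had d j ℓ * u ℓ) * rsign (δ ℓ)))
          = (Had d k j * Had d r j) *
            ((∑ ℓ, (Had d j ℓ * u ℓ) * rsign (δ ℓ)) *
             (∑ ℓ, (Had d j ℓ * u ℓ) * rsign (δ ℓ))) := fun δ => by ring
      rw [Finset.sum_congr rfl fun δ _ => h4 δ, ← Finset.mul_sum,
        sum_pair d (fun ℓ => Had d j ℓ * u ℓ) (fun ℓ => Had d j ℓ * u ℓ)]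
      have h5 : ∑ ℓ, (Had d j ℓ * u ℓ) * (Had d j ℓ * u ℓ) = 1 := by
        rw [Finset.sum_congr rfl fun ℓ (_ : ℓ ∈ Finset.univ) =>
          (by ring : (Had d j ℓ * u ℓ) * (Had d j ℓ * u ℓ)
            = (Had d j ℓ * Had d j ℓ) * u ℓ ^ 2)]
        rw [Finset.sum_congr rfl fun ℓ (_ : ℓ ∈ Finset.univ) => by rw [Had_sq d j ℓ, one_mul]]
        exact hu
      rw [h5, mul_one]
      ring
    rw [Finset.sum_congr rfl fun j _ => h3 j, ← Finset.mul_sum]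
  rw [h2, had_orth m hd k r]
  ring

end StructuredRotationAux

-- STATEMENT 0
theorem stmt0 (m d : ℕ) (hd : d = 2 ^ m) (u : Fin d → ℝ) (hu : ∑ ℓ, u ℓ ^ 2 = 1) :
    (∀ k, ∫ ω, Tcoord d u ω k ∂μsigns d = 0) ∧
    (∀ k r, ∫ ω, Tcoord d u ω k * Tcoord d u ω r ∂μsigns d
      = if k = r then 1 / (d : ℝ) else 0) := by
  have hd0 : (d : ℝ) ≠ 0 := by
    have : 0 < d := hd ▸ (Nat.pow_pos (by norm_num) : 0 < 2 ^ m)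
    exact_mod_cast this.ne'
  have h2d : ((2 : ℝ) ^ d * 2 ^ d) ≠ 0 := by positivity
  constructor
  · intro k
    rw [integral_musigns, sum_Tcoord, mul_zero]
  · intro k r
    rw [integral_musigns, sum_Tcoord_mul m d hd u hu k r]
    by_cases h : k = r
    · rw [if_pos h, if_pos h]
      field_simp
    · rw [if_neg h, if_neg h]
      ring
end

section
/- For every x ∈ ℝ, |cos(x) − e^{−x²/2}| ≤ x⁴/6. -/
open MeasureTheory ProbabilityTheory Finset
open scoped ENNReal NNReal

-- STATEMENT 5
lemma sin_ge_aux (x : ℝ) (hx : 0 ≤ x) : x - x ^ 3 / 6 ≤ Real.sin x := by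
  have h : MonotoneOn (fun t : ℝ => Real.sin t - (t - t ^ 3 / 6)) (Set.Ici 0) := by
    apply monotoneOn_of_deriv_nonneg (convex_Ici 0)
    · fun_prop
    · fun_prop
    · intro t _
      have hd : HasDerivAt (fun t : ℝ => Real.sin t - (t - t ^ 3 / 6))
          (Real.cos t - (1 - 3 * t ^ 2 / 6)) t := by
        have h1 := (Real.hasDerivAt_sin t)
        have h2 : HasDerivAt (fun t : ℝ => t - t ^ 3 / 6) (1 - 3 * t ^ 2 / 6) t := by
          simpa [Pi.sub_def] using (hasDerivAt_id t).sub (((hasDerivAt_pow 3 t)).div_const 6)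
        simpa [Pi.sub_def] using h1.sub h2
      rw [hd.deriv]
      nlinarith [Real.one_sub_sq_div_two_le_cos (x := t)]
  have := h Set.self_mem_Ici (Set.mem_Ici.2 hx) hx
  simpa using this

lemma cos_le_aux (x : ℝ) : Real.cos x ≤ 1 - x ^ 2 / 2 + x ^ 4 / 24 := by
  wlog hx : 0 ≤ x with H
  · have h := H (-x) (by linarith)
    simp only [Real.cos_neg] at h
    nlinarith [h]
  have h : MonotoneOn (fun t : ℝ => (1 - t ^ 2 / 2 + t ^ 4 / 24) - Real.cos t) (Set.Ici 0) := by
    apply monotoneOn_of_deriv_nonneg (convex_Ici 0)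
    · fun_prop
    · fun_prop
    · intro t ht
      have hd : HasDerivAt (fun t : ℝ => (1 - t ^ 2 / 2 + t ^ 4 / 24) - Real.cos t)
          ((0 - 2 * t / 2 + 4 * t ^ 3 / 24) - (-Real.sin t)) t := by
        have h2 : HasDerivAt (fun t : ℝ => 1 - t ^ 2 / 2 + t ^ 4 / 24)
            (0 - 2 * t / 2 + 4 * t ^ 3 / 24) t := by
          simpa [Pi.sub_def, Pi.add_def] using ((hasDerivAt_const t (1:ℝ)).sub ((hasDerivAt_pow 2 t).div_const 2)).add
            ((hasDerivAt_pow 4 t).div_const 24)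
        exact h2.sub (Real.hasDerivAt_cos t)
      rw [hd.deriv]
      have ht' : (0:ℝ) ≤ t := interior_subset ht
      have := sin_ge_aux t ht'
      nlinarith
  have := h Set.self_mem_Ici (Set.mem_Ici.2 hx) hx
  simp at this
  linarith

lemma exp_neg_le_aux (s : ℝ) (hs : 0 ≤ s) : Real.exp (-s) ≤ 1 - s + s ^ 2 / 2 := by
  have h : MonotoneOn (fun t : ℝ => (1 - t + t ^ 2 / 2) - Real.exp (-t)) (Set.Ici 0) := by
    apply monotoneOn_of_deriv_nonneg (convex_Ici 0)
    · fun_prop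
    · fun_prop
    · intro t _
      have hd : HasDerivAt (fun t : ℝ => (1 - t + t ^ 2 / 2) - Real.exp (-t))
          ((0 - 1 + 2 * t / 2) - (-Real.exp (-t))) t := by
        have h2 : HasDerivAt (fun t : ℝ => 1 - t + t ^ 2 / 2) (0 - 1 + 2 * t / 2) t := by
          simpa [Pi.sub_def, Pi.add_def] using ((hasDerivAt_const t (1:ℝ)).sub (hasDerivAt_id t)).add
            ((hasDerivAt_pow 2 t).div_const 2)
        have h3 : HasDerivAt (fun t : ℝ => Real.exp (-t)) (-Real.exp (-t)) t := by
          simpa [Function.comp_def] using (Real.hasDerivAt_exp (-t)).comp t ((hasDerivAt_id t).neg)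
        exact h2.sub h3
      rw [hd.deriv]
      have := Real.add_one_le_exp (-t)
      linarith
  have := h Set.self_mem_Ici (Set.mem_Ici.2 hs) hs
  simp at this
  linarith

theorem stmt5 (x : ℝ) : |Real.cos x - Real.exp (-(x ^ 2 / 2))| ≤ x ^ 4 / 6 := by
  have h1 := cos_le_aux x
  have h2 := Real.one_sub_sq_div_two_le_cos (x := x)
  have h3 := exp_neg_le_aux (x ^ 2 / 2) (by positivity)
  have h4 := Real.add_one_le_exp (-(x ^ 2 / 2))
  rw [abs_sub_le_iff]
  constructor <;> nlinarith [sq_nonneg x, sq_nonneg (x^2)]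
end
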